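/- arXiv:1201.5696 — 2 statements merged into one kernel-verified Lean document; each statement's English description precedes it below -/
import Mathlib

section
/- Let n ≥ 2, let F : ℂ → SO(2n,1) be a primitive frame with coefficient functions a₁,…,aₙ, c₀,…,cₙ, and set f := F e₁. Then B(f,f) = 1 everywhere, ∂_z∂_z̄ f = −2|c₁|² f, and ⟨∂_z f, ∂_z f⟩ vanishes identically; in particular f is a weakly conformal harmonic map of ℂ into S^{2n}_1. -/
open Complex Matrix

noncomputable section

/-- Wirtinger derivative `∂_z`, applied componentwise. -/
def wdz {E : Type*} [NormedAddCommGroup E] [NormedSpace ℂ E] (g : ℂ → E) (z : ℂ) : E :=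
  ((1 : ℂ)/2) • (fderiv ℝ g z 1) - (Complex.I/2) • (fderiv ℝ g z Complex.I)

/-- Wirtinger derivative `∂_z̄`, applied componentwise. -/
def wdzbar {E : Type*} [NormedAddCommGroup E] [NormedSpace ℂ E] (g : ℂ → E) (z : ℂ) : E :=
  ((1 : ℂ)/2) • (fderiv ℝ g z 1) + (Complex.I/2) • (fderiv ℝ g z Complex.I)

/-- Complex-bilinear extension of the Minkowski form, on `ℂ^{m+1}`, signature `(m,1)`. -/
def minkC (m : ℕ) (x y : Fin (m+1) → ℂ) : ℂ :=
  ∑ i : Fin (m+1), (if (i : ℕ) = m then -(x i * y i) else x i * y i)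

/-- Minkowski bilinear form on `ℝ^{m+1}`, signature `(m,1)`. -/
def minkR (m : ℕ) (x y : Fin (m+1) → ℝ) : ℝ :=
  ∑ i : Fin (m+1), (if (i : ℕ) = m then -(x i * y i) else x i * y i)

/-- Componentwise complexification of a real-vector-valued map. -/
def cplx {N : ℕ} (f : ℂ → Fin N → ℝ) : ℂ → Fin N → ℂ :=
  fun z i => (f z i : ℂ)

/-- Componentwise complex conjugation. -/
def conjV {N : ℕ} (v : Fin N → ℂ) : Fin N → ℂ :=
  fun i => (starRingEnd ℂ) (v i)

/-- `1`-based standard basis vector `e_k` of `ℝ^N`. -/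
def eR (N k : ℕ) : Fin N → ℝ := fun i => if (i : ℕ) + 1 = k then 1 else 0

/-- `1`-based standard basis vector `e_k` of `ℂ^N`. -/
def eC (N k : ℕ) : Fin N → ℂ := fun i => if (i : ℕ) + 1 = k then 1 else 0

/-- A smooth harmonic map of `ℂ` into de Sitter space `S^{2n}_1`. -/
def IsHarmonicS (n : ℕ) (f : ℂ → Fin (2*n+1) → ℝ) : Prop :=
  ContDiff ℝ (⊤ : ℕ∞) f ∧ (∀ z, minkR (2*n) (f z) (f z) = 1) ∧
    ∀ z, ∃ r : ℝ, wdz (wdzbar (cplx f)) z = (r : ℂ) • cplx f z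

/-- `f` has isotropy order at least `r`. -/
def HasIsotropyOrderAtLeast (n r : ℕ) (f : ℂ → Fin (2*n+1) → ℝ) : Prop :=
  ∀ a b : ℕ, 1 ≤ a + b → a + b ≤ 2*r + 1 →
    ∀ z, minkC (2*n) (wdz^[a] (cplx f) z) (wdz^[b] (cplx f) z) = 0

/-- `f` is superconformal: isotropy order at least `n-1`, and
`⟨∂_z^n f, ∂_z^n f⟩` does not vanish identically. -/
def IsSuperconformal (n : ℕ) (f : ℂ → Fin (2*n+1) → ℝ) : Prop :=
  HasIsotropyOrderAtLeast n (n-1) f ∧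
    ∃ z, minkC (2*n) (wdz^[n] (cplx f) z) (wdz^[n] (cplx f) z) ≠ 0

/-- `fs 0, fs 1, …, fs n` is a globally defined harmonic sequence for `f`. -/
def IsHarmonicSeq (n : ℕ) (f : ℂ → Fin (2*n+1) → ℝ)
    (fs : ℕ → ℂ → Fin (2*n+1) → ℂ) : Prop :=
  fs 0 = cplx f ∧ (∀ j, j ≤ n → ContDiff ℝ (⊤ : ℕ∞) (fs j)) ∧
    ∀ j, j < n →
      DiscreteTopology {z : ℂ // minkC (2*n) (fs j z) (conjV (fs j z)) = 0} ∧
      ∀ z, minkC (2*n) (fs j z) (conjV (fs j z)) ≠ 0 →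
        fs (j+1) z = wdz (fs j) z -
          (minkC (2*n) (wdz (fs j) z) (conjV (fs j z)) /
            minkC (2*n) (fs j z) (conjV (fs j z))) • fs j z

/-- The matrix `υ = diag(1,…,1,-1)` of the Minkowski form. -/
def upsR (n : ℕ) : Matrix (Fin (2*n+1)) (Fin (2*n+1)) ℝ :=
  Matrix.diagonal (fun i => if (i : ℕ) = 2*n then -1 else 1)

/-- Membership in `SO(2n,1)`. -/
def memSO (n : ℕ) (g : Matrix (Fin (2*n+1)) (Fin (2*n+1)) ℝ) : Prop :=
  gᵀ * upsR n * g = upsR n ∧ g.det = 1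

/-- The prescribed entries (in `1`-based indices `j k`) of the Maurer–Cartan
matrix `M = F⁻¹ ∂_z F` of a primitive frame. -/
def Ment (n : ℕ) (a c : ℕ → ℂ) (j k : ℕ) : ℂ :=
  if j = 1 ∧ k = 2 then -c 1
  else if j = 1 ∧ k = 3 then -(Complex.I * c 1)
  else if j = 2 ∧ k = 1 then c 1
  else if j = 3 ∧ k = 1 then Complex.I * c 1
  else if Even j ∧ k = j + 1 ∧ 2 ≤ j ∧ j ≤ 2*n then
    (if j = 2*n then a n else a (j/2))
  else if Even k ∧ j = k + 1 ∧ 2 ≤ k ∧ k ≤ 2*n then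
    (if k = 2*n then a n else -a (k/2))
  else if j = 2*n - 2 ∧ k = 2*n then -c n - c 0
  else if j = 2*n - 2 ∧ k = 2*n + 1 then -c n + c 0
  else if j = 2*n - 1 ∧ k = 2*n then Complex.I * c n + Complex.I * c 0
  else if j = 2*n - 1 ∧ k = 2*n + 1 then Complex.I * c n - Complex.I * c 0
  else if j = 2*n ∧ k = 2*n - 2 then c n + c 0
  else if j = 2*n ∧ k = 2*n - 1 then -(Complex.I * c n) - Complex.I * c 0
  else if j = 2*n + 1 ∧ k = 2*n - 2 then -c n + c 0
  else if j = 2*n + 1 ∧ k = 2*n - 1 then Complex.I * c n - Complex.I * c 0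
  else if Even j ∧ k = j + 2 ∧ 2 ≤ j ∧ j + 4 ≤ 2*n then -c (j/2 + 1)
  else if Even j ∧ k = j + 3 ∧ 2 ≤ j ∧ j + 4 ≤ 2*n then -(Complex.I * c (j/2 + 1))
  else if Odd j ∧ k = j + 1 ∧ 3 ≤ j ∧ j + 3 ≤ 2*n then Complex.I * c (j/2 + 1)
  else if Odd j ∧ k = j + 2 ∧ 3 ≤ j ∧ j + 3 ≤ 2*n then -c (j/2 + 1)
  else if Even k ∧ j = k + 2 ∧ 2 ≤ k ∧ k + 4 ≤ 2*n then c (k/2 + 1)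
  else if Odd k ∧ j = k + 1 ∧ 3 ≤ k ∧ k + 3 ≤ 2*n then -(Complex.I * c (k/2 + 1))
  else if Even k ∧ j = k + 3 ∧ 2 ≤ k ∧ k + 4 ≤ 2*n then Complex.I * c (k/2 + 1)
  else if Odd k ∧ j = k + 2 ∧ 3 ≤ k ∧ k + 3 ≤ 2*n then c (k/2 + 1)
  else 0

/-- The Maurer–Cartan form `F⁻¹ ∂_z F` (computed entrywise after complexifying `F`). -/
def MC (n : ℕ) (F : ℂ → Matrix (Fin (2*n+1)) (Fin (2*n+1)) ℝ) (z : ℂ) :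
    Matrix (Fin (2*n+1)) (Fin (2*n+1)) ℂ :=
  ((F z).map (fun t => (t : ℂ)))⁻¹ *
    Matrix.of (fun p q => wdz (fun w => ((F w p q : ℝ) : ℂ)) z)

/-- `F` is a primitive frame with coefficient functions `a 1, …, a n` and
`c 0, c 1, …, c n`. -/
def IsPrimitiveFrame (n : ℕ) (F : ℂ → Matrix (Fin (2*n+1)) (Fin (2*n+1)) ℝ)
    (a c : ℕ → ℂ → ℂ) : Prop :=
  (∀ p q, ContDiff ℝ (⊤ : ℕ∞) (fun z => F z p q)) ∧
  (∀ z, memSO n (F z)) ∧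
  (∀ j, 1 ≤ j → j ≤ n → ContDiff ℝ (⊤ : ℕ∞) (a j)) ∧
  (∀ j, j ≤ n → ContDiff ℝ (⊤ : ℕ∞) (c j)) ∧
  ∀ z, MC n F z =
    Matrix.of (fun p q : Fin (2*n+1) =>
      Ment n (fun k => a k z) (fun k => c k z) ((p : ℕ) + 1) ((q : ℕ) + 1))

/-- The primitive frame is cyclic: at some point all of `c 0, …, c n` are nonzero. -/
def IsCyclicCoeffs (n : ℕ) (c : ℕ → ℂ → ℂ) : Prop :=
  ∃ z, ∀ j, j ≤ n → c j z ≠ 0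

/-- Double periodicity with respect to the lattice generated by `ω₁, ω₂`. -/
def DoublyPeriodic {α : Type*} (ω₁ ω₂ : ℂ) (f : ℂ → α) : Prop :=
  LinearIndependent ℝ ![ω₁, ω₂] ∧ ∀ z, f (z + ω₁) = f z ∧ f (z + ω₂) = f z


section WirtCalc

variable {z : ℂ}

lemma wdz_comp_pi {N : ℕ} (g : ℂ → Fin N → ℂ) (hg : DifferentiableAt ℝ g z) (i : Fin N) :
    wdz g z i = wdz (fun w => g w i) z := by
  have h : (fun w => g w i)
      = (ContinuousLinearMap.proj (R := ℝ) (φ := fun _ : Fin N => ℂ) i) ∘ g := rfl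
  unfold wdz
  rw [h, fderiv_comp z (ContinuousLinearMap.proj i).differentiableAt hg]
  simp

lemma wdzbar_comp_pi {N : ℕ} (g : ℂ → Fin N → ℂ) (hg : DifferentiableAt ℝ g z) (i : Fin N) :
    wdzbar g z i = wdzbar (fun w => g w i) z := by
  have h : (fun w => g w i)
      = (ContinuousLinearMap.proj (R := ℝ) (φ := fun _ : Fin N => ℂ) i) ∘ g := rfl
  unfold wdzbar
  rw [h, fderiv_comp z (ContinuousLinearMap.proj i).differentiableAt hg]
  simp

lemma wdz_mul (u v : ℂ → ℂ) (hu : DifferentiableAt ℝ u z) (hv : DifferentiableAt ℝ v z) :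
    wdz (fun w => u w * v w) z = wdz u z * v z + u z * wdz v z := by
  unfold wdz
  rw [fderiv_fun_mul hu hv]
  simp only [ContinuousLinearMap.add_apply, ContinuousLinearMap.smul_apply, smul_eq_mul]
  ring

lemma wdzbar_mul (u v : ℂ → ℂ) (hu : DifferentiableAt ℝ u z) (hv : DifferentiableAt ℝ v z) :
    wdzbar (fun w => u w * v w) z = wdzbar u z * v z + u z * wdzbar v z := by
  unfold wdzbar
  rw [fderiv_fun_mul hu hv]
  simp only [ContinuousLinearMap.add_apply, ContinuousLinearMap.smul_apply, smul_eq_mul]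
  ring

lemma wdzbar_add (u v : ℂ → ℂ) (hu : DifferentiableAt ℝ u z) (hv : DifferentiableAt ℝ v z) :
    wdzbar (fun w => u w + v w) z = wdzbar u z + wdzbar v z := by
  unfold wdzbar
  rw [fderiv_fun_add hu hv]
  simp only [ContinuousLinearMap.add_apply, smul_eq_mul]
  ring

lemma wdzbar_ofReal (u : ℂ → ℝ) (hu : DifferentiableAt ℝ u z) :
    wdzbar (fun w => (u w : ℂ)) z = (starRingEnd ℂ) (wdz (fun w => (u w : ℂ)) z) := by
  have h : (fun w => (u w : ℂ)) = (Complex.ofRealCLM : ℝ →L[ℝ] ℂ) ∘ u := rfl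
  unfold wdz wdzbar
  rw [h, fderiv_comp z Complex.ofRealCLM.differentiableAt hu]
  simp only [ContinuousLinearMap.fderiv, ContinuousLinearMap.coe_comp', Function.comp_apply,
    Complex.ofRealCLM_apply, smul_eq_mul, map_sub, _root_.map_mul]
  rw [Complex.conj_ofReal, Complex.conj_ofReal]
  simp only [map_div₀, Complex.conj_I, _root_.map_one, map_ofNat]
  ring

lemma wdz_conj (u : ℂ → ℂ) (hu : DifferentiableAt ℝ u z) :
    wdz (fun w => (starRingEnd ℂ) (u w)) z = (starRingEnd ℂ) (wdzbar u z) := by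
  have h : (fun w => (starRingEnd ℂ) (u w)) = (Complex.conjCLE : ℂ ≃L[ℝ] ℂ) ∘ u := rfl
  unfold wdz wdzbar
  rw [h, fderiv_comp z Complex.conjCLE.differentiableAt hu]
  simp only [ContinuousLinearEquiv.fderiv, ContinuousLinearMap.coe_comp', Function.comp_apply,
    smul_eq_mul, map_add, _root_.map_mul, ContinuousLinearEquiv.coe_coe, Complex.conjCLE_apply]
  simp only [map_div₀, Complex.conj_I, _root_.map_one, map_ofNat]
  ring

end WirtCalc
section Clairaut

lemma fderiv_eval (g : ℂ → ℂ) (hdd : DifferentiableAt ℝ (fderiv ℝ g) z) (v w : ℂ) :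
    fderiv ℝ (fun y => fderiv ℝ g y v) z w = fderiv ℝ (fderiv ℝ g) z w v := by
  rw [fderiv_clm_apply hdd (differentiableAt_const v)]
  simp

lemma wdz_wdzbar_comm (g : ℂ → ℂ) (hg : ContDiff ℝ 2 g) (z : ℂ) :
    wdz (wdzbar g) z = wdzbar (wdz g) z := by
  have hd : ContDiff ℝ 1 (fderiv ℝ g) := hg.fderiv_right (by norm_num)
  have hdd : DifferentiableAt ℝ (fderiv ℝ g) z := (hd.differentiable one_ne_zero) z
  have hdv : ∀ v : ℂ, DifferentiableAt ℝ (fun y => fderiv ℝ g y v) z := by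
    intro v
    exact hdd.clm_apply (differentiableAt_const v)
  have hsymm := (hg.contDiffAt (x := z)).isSymmSndFDerivAt (by simp)
  have h1I : fderiv ℝ (fderiv ℝ g) z 1 Complex.I = fderiv ℝ (fderiv ℝ g) z Complex.I 1 :=
    hsymm 1 Complex.I
  have expand : ∀ v : ℂ,
      fderiv ℝ (wdzbar g) z v = ((1:ℂ)/2) • fderiv ℝ (fderiv ℝ g) z v 1
        + (Complex.I/2) • fderiv ℝ (fderiv ℝ g) z v Complex.I := by
    intro v
    have : wdzbar g = fun y => ((1:ℂ)/2) • (fun y => fderiv ℝ g y 1) y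
        + (Complex.I/2) • (fun y => fderiv ℝ g y Complex.I) y := rfl
    rw [this, fderiv_fun_add ((hdv 1).fun_const_smul _) ((hdv Complex.I).fun_const_smul _)]
    rw [fderiv_fun_const_smul (hdv 1), fderiv_fun_const_smul (hdv Complex.I)]
    simp only [ContinuousLinearMap.add_apply, ContinuousLinearMap.coe_smul',
      Pi.smul_apply]
    rw [fderiv_eval g hdd 1 v, fderiv_eval g hdd Complex.I v]
  have expand' : ∀ v : ℂ,
      fderiv ℝ (wdz g) z v = ((1:ℂ)/2) • fderiv ℝ (fderiv ℝ g) z v 1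
        - (Complex.I/2) • fderiv ℝ (fderiv ℝ g) z v Complex.I := by
    intro v
    have : wdz g = fun y => ((1:ℂ)/2) • (fun y => fderiv ℝ g y 1) y
        - (Complex.I/2) • (fun y => fderiv ℝ g y Complex.I) y := rfl
    rw [this, fderiv_fun_sub ((hdv 1).fun_const_smul _) ((hdv Complex.I).fun_const_smul _)]
    rw [fderiv_fun_const_smul (hdv 1), fderiv_fun_const_smul (hdv Complex.I)]
    simp only [ContinuousLinearMap.sub_apply, ContinuousLinearMap.coe_smul',
      Pi.smul_apply]
    rw [fderiv_eval g hdd 1 v, fderiv_eval g hdd Complex.I v]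
  rw [show wdz (wdzbar g) z = ((1:ℂ)/2) • fderiv ℝ (wdzbar g) z 1
      - (Complex.I/2) • fderiv ℝ (wdzbar g) z Complex.I from rfl,
    show wdzbar (wdz g) z = ((1:ℂ)/2) • fderiv ℝ (wdz g) z 1
      + (Complex.I/2) • fderiv ℝ (wdz g) z Complex.I from rfl,
    expand 1, expand Complex.I, expand' 1, expand' Complex.I]
  simp only [smul_eq_mul]
  linear_combination (Complex.I/2) * h1I

end Clairaut
section MentEval

set_option maxHeartbeats 2000000 in
lemma ment_col1 {n : ℕ} (hn : 2 ≤ n) (a c : ℕ → ℂ) (j : ℕ) :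
    Ment n a c j 1 = if j = 2 then c 1 else if j = 3 then Complex.I * c 1 else 0 := by
  have e1 : ¬(1 = 2*n) := by omega
  have e2 : ¬(1 = 2*n+1) := by omega
  have e3 : ¬(1 = 2*n-2) := by omega
  have e4 : ¬(1 = 2*n-1) := by omega
  unfold Ment
  simp only [Nat.even_iff, Nat.odd_iff, e1, e2, e3, e4]
  norm_num
  split_ifs <;> first | rfl | omega | (exfalso; omega)

set_option maxHeartbeats 2000000 in
lemma ment_col2 {n : ℕ} (hn : 2 ≤ n) (a c : ℕ → ℂ) (j : ℕ) :
    Ment n a c j 2 = if j = 1 then -c 1 else if j = 3 then -a 1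
      else if j = 4 then (if n = 2 then c 2 + c 0 else c 2)
      else if j = 5 then (if n = 2 then -c 2 + c 0 else Complex.I * c 2)
      else 0 := by
  have e1 : ¬(2 = 2*n) := by omega
  have e2 : ¬(2 = 2*n+1) := by omega
  have e3 : (2 = 2*n-2) ↔ n = 2 := by omega
  have e4 : ¬(2 = 2*n-1) := by omega
  have e5 : (2+4 ≤ 2*n) ↔ ¬(n = 2) := by omega
  unfold Ment
  simp only [Nat.even_iff, Nat.odd_iff, e1, e2, e3, e4, e5]
  norm_num
  split_ifs <;>
    first
      | rfl
      | (exfalso; omega)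
      | (subst_vars; rfl)
      | (subst_vars; exfalso; omega)
      | (have hne : n = 2 := by omega
         subst hne; first | rfl | (subst_vars; rfl) | (exfalso; omega))

set_option maxHeartbeats 2000000 in
lemma ment_col3 {n : ℕ} (hn : 2 ≤ n) (a c : ℕ → ℂ) (j : ℕ) :
    Ment n a c j 3 = if j = 1 then -(Complex.I * c 1) else if j = 2 then a 1
      else if j = 4 then (if n = 2 then -(Complex.I * c 2) - Complex.I * c 0
        else -(Complex.I * c 2))
      else if j = 5 then (if n = 2 then Complex.I * c 2 - Complex.I * c 0 else c 2)
      else 0 := by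
  have e1 : ¬(3 = 2*n) := by omega
  have e2 : ¬(3 = 2*n+1) := by omega
  have e3 : ¬(3 = 2*n-2) := by omega
  have e4 : (3 = 2*n-1) ↔ n = 2 := by omega
  have e5 : (3+3 ≤ 2*n) ↔ ¬(n = 2) := by omega
  unfold Ment
  simp only [Nat.even_iff, Nat.odd_iff, e1, e2, e3, e4, e5]
  norm_num
  split_ifs <;>
    first
      | rfl
      | (exfalso; omega)
      | (subst_vars; rfl)
      | (subst_vars; exfalso; omega)
      | (have hne : n = 2 := by omega
         subst hne; first | rfl | (subst_vars; rfl) | (exfalso; omega))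

lemma ment_combo {n : ℕ} (hn : 2 ≤ n) (a c : ℕ → ℂ) (j : ℕ) :
    Ment n a c j 2 - Complex.I * Ment n a c j 3
      = if j = 1 then -2 * c 1 else if j = 2 then -(Complex.I * a 1)
        else if j = 3 then -a 1 else 0 := by
  rw [ment_col2 hn, ment_col3 hn]
  have hI : Complex.I * Complex.I = -1 := Complex.I_mul_I
  split_ifs <;>
    first
      | (exfalso; omega)
      | ring1
      | linear_combination c 1 * hI
      | linear_combination c 2 * hI
      | linear_combination (c 2 + c 0) * hI
      | linear_combination (c 0 - c 2) * hI

end MentEval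
section Collapse

lemma sum_collapse1R {N : ℕ} (p : Fin N) (v w : Fin N → ℝ)
    (hw : ∀ k, w k = if k = p then 1 else 0) :
    ∑ k, v k * w k = v p := by
  have h : ∀ k, v k * w k = if k = p then v p else 0 := by
    intro k; rw [hw k]; by_cases h1 : k = p <;> simp [h1]
  rw [Finset.sum_congr rfl fun k _ => h k, Finset.sum_ite_eq']
  simp

lemma sum_collapse2 {N : ℕ} (p1 p2 : Fin N) (h12 : p1 ≠ p2) (v w : Fin N → ℂ) (x y : ℂ)
    (hw : ∀ k, w k = if k = p1 then x else if k = p2 then y else 0) :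
    ∑ k, v k * w k = v p1 * x + v p2 * y := by
  have h : ∀ k, v k * w k
      = (if k = p1 then v p1 * x else 0) + (if k = p2 then v p2 * y else 0) := by
    intro k; rw [hw k]
    by_cases h1 : k = p1 <;> by_cases h2 : k = p2 <;> simp_all
  rw [Finset.sum_congr rfl fun k _ => h k, Finset.sum_add_distrib]
  simp [Finset.sum_ite_eq']

lemma sum_collapse3 {N : ℕ} (p1 p2 p3 : Fin N) (h12 : p1 ≠ p2) (h13 : p1 ≠ p3)
    (h23 : p2 ≠ p3) (v w : Fin N → ℂ) (x y t : ℂ)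
    (hw : ∀ k, w k = if k = p1 then x else if k = p2 then y else if k = p3 then t else 0) :
    ∑ k, v k * w k = v p1 * x + v p2 * y + v p3 * t := by
  have h : ∀ k, v k * w k
      = (if k = p1 then v p1 * x else 0) + (if k = p2 then v p2 * y else 0)
        + (if k = p3 then v p3 * t else 0) := by
    intro k; rw [hw k]
    by_cases h1 : k = p1 <;> by_cases h2 : k = p2 <;> by_cases h3 : k = p3 <;> simp_all
  rw [Finset.sum_congr rfl fun k _ => h k, Finset.sum_add_distrib, Finset.sum_add_distrib]
  simp [Finset.sum_ite_eq']

end Collapse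

section Frame

variable {n : ℕ} {F : ℂ → Matrix (Fin (2*n+1)) (Fin (2*n+1)) ℝ} {a c : ℕ → ℂ → ℂ}

lemma frame_wdz_entry (hF : IsPrimitiveFrame n F a c) (z : ℂ) (p q : Fin (2*n+1)) :
    wdz (fun w => ((F w p q : ℝ) : ℂ)) z
      = ∑ k, ((F z p k : ℝ) : ℂ)
          * Ment n (fun m => a m z) (fun m => c m z) ((k : ℕ)+1) ((q : ℕ)+1) := by
  obtain ⟨hFsm, hSO, ha, hc, hMC⟩ := hF
  have h1 : ((F z).map (fun t => (t:ℂ))).det = (((F z).det : ℝ) : ℂ) := by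
    rw [show ((F z).map (fun t => (t:ℂ))) = Complex.ofRealHom.mapMatrix (F z) from rfl,
      ← RingHom.map_det]
    rfl
  have hdet : IsUnit ((F z).map (fun t => (t:ℂ))).det := by
    rw [h1, (hSO z).2]; simp
  have h2 := hMC z
  unfold MC at h2
  have h4 : Matrix.of (fun p q => wdz (fun w => ((F w p q : ℝ):ℂ)) z)
      = ((F z).map (fun t => (t:ℂ))) * Matrix.of (fun p q : Fin (2*n+1) =>
          Ment n (fun m => a m z) (fun m => c m z) ((p:ℕ)+1) ((q:ℕ)+1)) := by
    have h3 := congrArg (fun M => ((F z).map (fun t => (t:ℂ))) * M) h2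
    simpa [← Matrix.mul_assoc, Matrix.mul_nonsing_inv _ hdet] using h3
  have h5 := congrFun (congrFun h4 p) q
  simpa [Matrix.mul_apply, Matrix.map_apply] using h5

end Frame
section MoreCalc

variable {z : ℂ}

lemma wdz_sub (u v : ℂ → ℂ) (hu : DifferentiableAt ℝ u z) (hv : DifferentiableAt ℝ v z) :
    wdz (fun w => u w - v w) z = wdz u z - wdz v z := by
  unfold wdz
  rw [fderiv_fun_sub hu hv]
  simp only [ContinuousLinearMap.sub_apply, smul_eq_mul]
  ring

lemma wdz_const_mul (u : ℂ → ℂ) (hu : DifferentiableAt ℝ u z) (b : ℂ) :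
    wdz (fun w => b * u w) z = b * wdz u z := by
  unfold wdz
  rw [fderiv_const_mul hu b]
  simp only [ContinuousLinearMap.coe_smul', Pi.smul_apply, smul_eq_mul]
  ring

lemma wdzbar_const_mul (u : ℂ → ℂ) (hu : DifferentiableAt ℝ u z) (b : ℂ) :
    wdzbar (fun w => b * u w) z = b * wdzbar u z := by
  unfold wdzbar
  rw [fderiv_const_mul hu b]
  simp only [ContinuousLinearMap.coe_smul', Pi.smul_apply, smul_eq_mul]
  ring

lemma sum_ind {N : ℕ} (p : Fin N) (v : Fin N → ℂ) (α : ℂ) :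
    ∑ k, v k * (α * (if k = p then 1 else 0)) = α * v p := by
  have h : ∀ k, v k * (α * (if k = p then 1 else 0)) = if k = p then α * v p else 0 := by
    intro k; split_ifs with h1 <;> simp [h1] <;> ring
  rw [Finset.sum_congr rfl fun k _ => h k, Finset.sum_ite_eq']
  simp

lemma sum_scal {N : ℕ} (v m : Fin N → ℂ) (γ : ℂ) :
    ∑ k, v k * (γ * m k) = γ * ∑ k, v k * m k := by
  rw [Finset.mul_sum]
  exact Finset.sum_congr rfl fun k _ => by ring

end MoreCalc

section Frame2

variable {n : ℕ} {F : ℂ → Matrix (Fin (2*n+1)) (Fin (2*n+1)) ℝ} {a c : ℕ → ℂ → ℂ}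

lemma frame_wdzbar_entry (hF : IsPrimitiveFrame n F a c) (z : ℂ) (p q : Fin (2*n+1)) :
    wdzbar (fun w => ((F w p q : ℝ) : ℂ)) z
      = ∑ k, ((F z p k : ℝ) : ℂ)
          * (starRingEnd ℂ) (Ment n (fun m => a m z) (fun m => c m z) ((k : ℕ)+1) ((q : ℕ)+1)) := by
  have hu : DifferentiableAt ℝ (fun w => F w p q) z :=
    ((hF.1 p q).differentiable (by simp)).differentiableAt
  rw [wdzbar_ofReal _ hu, frame_wdz_entry hF z p q, map_sum]
  exact Finset.sum_congr rfl fun k _ => by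
    rw [_root_.map_mul, Complex.conj_ofReal]

lemma frame_wdz_col0 (hn : 2 ≤ n) (hF : IsPrimitiveFrame n F a c) (z : ℂ) (p : Fin (2*n+1)) :
    wdz (fun w => ((F w p ⟨0, by omega⟩ : ℝ) : ℂ)) z
      = c 1 z * ((F z p ⟨1, by omega⟩ : ℝ) : ℂ)
        + Complex.I * c 1 z * ((F z p ⟨2, by omega⟩ : ℝ) : ℂ) := by
  rw [frame_wdz_entry hF z p ⟨0, by omega⟩]
  rw [sum_collapse2 ⟨1, by omega⟩ ⟨2, by omega⟩ (by simp [Fin.ext_iff])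
    (fun k => ((F z p k : ℝ) : ℂ)) _ (c 1 z) (Complex.I * c 1 z) ?_]
  · ring
  · intro k
    rw [show ((⟨0, by omega⟩ : Fin (2*n+1)) : ℕ) + 1 = 1 from rfl, ment_col1 hn]
    split_ifs <;>
      first | rfl | (exfalso; simp only [Fin.ext_iff, Fin.val_mk] at *; omega)

lemma frame_wdz_combo (hn : 2 ≤ n) (hF : IsPrimitiveFrame n F a c) (z : ℂ) (p : Fin (2*n+1)) :
    wdz (fun w => ((F w p ⟨1, by omega⟩ : ℝ) : ℂ)) z
      - Complex.I * wdz (fun w => ((F w p ⟨2, by omega⟩ : ℝ) : ℂ)) z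
      = (-2 * c 1 z) * ((F z p ⟨0, by omega⟩ : ℝ) : ℂ)
        + (-(Complex.I * a 1 z)) * ((F z p ⟨1, by omega⟩ : ℝ) : ℂ)
        + (-(a 1 z)) * ((F z p ⟨2, by omega⟩ : ℝ) : ℂ) := by
  rw [frame_wdz_entry hF z p ⟨1, by omega⟩, frame_wdz_entry hF z p ⟨2, by omega⟩,
    Finset.mul_sum, ← Finset.sum_sub_distrib]
  have h : ∀ k : Fin (2*n+1),
      ((F z p k : ℝ) : ℂ) * Ment n (fun m => a m z) (fun m => c m z) ((k:ℕ)+1) (1+1)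
        - Complex.I * (((F z p k : ℝ) : ℂ) * Ment n (fun m => a m z) (fun m => c m z) ((k:ℕ)+1) (2+1))
      = ((F z p k : ℝ) : ℂ) * (Ment n (fun m => a m z) (fun m => c m z) ((k:ℕ)+1) 2
          - Complex.I * Ment n (fun m => a m z) (fun m => c m z) ((k:ℕ)+1) 3) := by
    intro k; norm_num; ring
  rw [Finset.sum_congr rfl fun k _ => h k]
  rw [sum_collapse3 (⟨0, by omega⟩ : Fin (2*n+1)) ⟨1, by omega⟩ ⟨2, by omega⟩
    (by simp [Fin.ext_iff]) (by simp [Fin.ext_iff]) (by simp [Fin.ext_iff])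
    (fun k => ((F z p k : ℝ) : ℂ)) _ (-2 * c 1 z) (-(Complex.I * a 1 z)) (-(a 1 z)) ?_]
  · ring
  · intro k
    rw [ment_combo hn]
    split_ifs <;>
      first | rfl | (exfalso; simp only [Fin.ext_iff, Fin.val_mk] at *; omega)

lemma frame_wdzbar_col0 (hn : 2 ≤ n) (hF : IsPrimitiveFrame n F a c) (z : ℂ) (p : Fin (2*n+1)) :
    wdzbar (fun w => ((F w p ⟨0, by omega⟩ : ℝ) : ℂ)) z
      = (starRingEnd ℂ) (c 1 z) * ((F z p ⟨1, by omega⟩ : ℝ) : ℂ)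
        - Complex.I * (starRingEnd ℂ) (c 1 z) * ((F z p ⟨2, by omega⟩ : ℝ) : ℂ) := by
  have hu : DifferentiableAt ℝ (fun w => F w p ⟨0, by omega⟩) z :=
    ((hF.1 p _).differentiable (by simp)).differentiableAt
  rw [wdzbar_ofReal _ hu, frame_wdz_col0 hn hF z p]
  rw [map_add, _root_.map_mul, _root_.map_mul, _root_.map_mul, Complex.conj_ofReal,
    Complex.conj_ofReal, Complex.conj_I]
  ring

end Frame2
section Integrability

lemma mulVec_cancel {N : ℕ} (A : Matrix (Fin N) (Fin N) ℂ) (hdet : IsUnit A.det)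
    (X Y : Fin N → ℂ) (h : ∀ p, ∑ k, A p k * X k = ∑ k, A p k * Y k) : X = Y := by
  have h' : A *ᵥ X = A *ᵥ Y := funext fun p => by
    simpa [Matrix.mulVec, dotProduct] using h p
  have h2 := congrArg (fun v => A⁻¹ *ᵥ v) h'
  simpa [Matrix.mulVec_mulVec, Matrix.nonsing_inv_mul _ hdet] using h2

variable {n : ℕ} {F : ℂ → Matrix (Fin (2*n+1)) (Fin (2*n+1)) ℝ} {a c : ℕ → ℂ → ℂ}

lemma frame_det_isUnit (hF : IsPrimitiveFrame n F a c) (z : ℂ) :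
    IsUnit ((F z).map (fun t => (t:ℂ))).det := by
  have h1 : ((F z).map (fun t => (t:ℂ))).det = (((F z).det : ℝ) : ℂ) := by
    rw [show ((F z).map (fun t => (t:ℂ))) = Complex.ofRealHom.mapMatrix (F z) from rfl,
      ← RingHom.map_det]
    rfl
  rw [h1, (hF.2.1 z).2]
  simp

set_option maxHeartbeats 1000000 in
lemma frame_cbar (hn : 2 ≤ n) (hF : IsPrimitiveFrame n F a c) (z : ℂ) :
    wdzbar (c 1) z = -(Complex.I) * (starRingEnd ℂ) (a 1 z) * c 1 z := by
  have h1n : 1 ≤ n := by omega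
  have hdC : ∀ w : ℂ, DifferentiableAt ℝ (c 1) w :=
    fun w => ((hF.2.2.2.1 1 h1n).differentiable (by simp)).differentiableAt
  have hdCc : ∀ w : ℂ, DifferentiableAt ℝ (fun w' => (starRingEnd ℂ) (c 1 w')) w :=
    fun w => (Complex.conjCLE.differentiableAt).comp w (hdC w)
  have hdG : ∀ (p q : Fin (2*n+1)) (w : ℂ),
      DifferentiableAt ℝ (fun w' => ((F w' p q : ℝ) : ℂ)) w := fun p q w =>
    Complex.ofRealCLM.differentiableAt.comp w
      (((hF.1 p q).differentiable (by simp)).differentiableAt)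
  have key : ∀ p : Fin (2*n+1),
      (starRingEnd ℂ) (wdzbar (c 1) z) * ((F z p ⟨1, by omega⟩ : ℝ) : ℂ)
        + (starRingEnd ℂ) (c 1 z) * (∑ k, ((F z p k : ℝ) : ℂ)
            * Ment n (fun m => a m z) (fun m => c m z) ((k:ℕ)+1) 2)
        - (Complex.I * (starRingEnd ℂ) (wdzbar (c 1) z) * ((F z p ⟨2, by omega⟩ : ℝ) : ℂ)
          + Complex.I * (starRingEnd ℂ) (c 1 z) * (∑ k, ((F z p k : ℝ) : ℂ)
            * Ment n (fun m => a m z) (fun m => c m z) ((k:ℕ)+1) 3))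
      = wdzbar (c 1) z * ((F z p ⟨1, by omega⟩ : ℝ) : ℂ)
        + c 1 z * (∑ k, ((F z p k : ℝ) : ℂ)
            * (starRingEnd ℂ) (Ment n (fun m => a m z) (fun m => c m z) ((k:ℕ)+1) 2))
        + Complex.I * wdzbar (c 1) z * ((F z p ⟨2, by omega⟩ : ℝ) : ℂ)
        + Complex.I * c 1 z * (∑ k, ((F z p k : ℝ) : ℂ)
            * (starRingEnd ℂ) (Ment n (fun m => a m z) (fun m => c m z) ((k:ℕ)+1) 3)) := by
    intro p
    have hS2 : wdz (fun w => ((F w p ⟨1, by omega⟩ : ℝ) : ℂ)) z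
        = ∑ k, ((F z p k : ℝ) : ℂ)
            * Ment n (fun m => a m z) (fun m => c m z) ((k:ℕ)+1) 2 := by
      rw [frame_wdz_entry hF z p ⟨1, by omega⟩]
    have hS3 : wdz (fun w => ((F w p ⟨2, by omega⟩ : ℝ) : ℂ)) z
        = ∑ k, ((F z p k : ℝ) : ℂ)
            * Ment n (fun m => a m z) (fun m => c m z) ((k:ℕ)+1) 3 := by
      rw [frame_wdz_entry hF z p ⟨2, by omega⟩]
    have hT2 : wdzbar (fun w => ((F w p ⟨1, by omega⟩ : ℝ) : ℂ)) z
        = ∑ k, ((F z p k : ℝ) : ℂ)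
            * (starRingEnd ℂ) (Ment n (fun m => a m z) (fun m => c m z) ((k:ℕ)+1) 2) := by
      rw [frame_wdzbar_entry hF z p ⟨1, by omega⟩]
    have hT3 : wdzbar (fun w => ((F w p ⟨2, by omega⟩ : ℝ) : ℂ)) z
        = ∑ k, ((F z p k : ℝ) : ℂ)
            * (starRingEnd ℂ) (Ment n (fun m => a m z) (fun m => c m z) ((k:ℕ)+1) 3) := by
      rw [frame_wdzbar_entry hF z p ⟨2, by omega⟩]
    have hcl := wdz_wdzbar_comm (fun w => ((F w p ⟨0, by omega⟩ : ℝ) : ℂ))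
      ((Complex.ofRealCLM.contDiff.comp (hF.1 p ⟨0, by omega⟩)).of_le (WithTop.coe_le_coe.mpr (le_top : (2:ℕ∞) ≤ ⊤))) z
    have hbar : wdzbar (fun w => ((F w p ⟨0, by omega⟩ : ℝ) : ℂ))
        = fun w => (starRingEnd ℂ) (c 1 w) * ((F w p ⟨1, by omega⟩ : ℝ) : ℂ)
            - Complex.I * (starRingEnd ℂ) (c 1 w) * ((F w p ⟨2, by omega⟩ : ℝ) : ℂ) :=
      funext fun w => frame_wdzbar_col0 hn hF w p
    have hz : wdz (fun w => ((F w p ⟨0, by omega⟩ : ℝ) : ℂ))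
        = fun w => c 1 w * ((F w p ⟨1, by omega⟩ : ℝ) : ℂ)
            + Complex.I * c 1 w * ((F w p ⟨2, by omega⟩ : ℝ) : ℂ) :=
      funext fun w => frame_wdz_col0 hn hF w p
    rw [hbar, hz] at hcl
    rw [wdz_sub _ _ ((hdCc z).fun_mul (hdG p _ z))
        (((differentiableAt_const _).fun_mul (hdCc z)).fun_mul (hdG p _ z)),
      wdz_mul (fun w => (starRingEnd ℂ) (c 1 w)) _ (hdCc z) (hdG p _ z),
      wdz_mul (fun w => Complex.I * (starRingEnd ℂ) (c 1 w)) _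
        ((differentiableAt_const _).mul (hdCc z)) (hdG p _ z),
      wdz_const_mul _ (hdCc z) Complex.I,
      wdz_conj _ (hdC z), hS2, hS3] at hcl
    rw [wdzbar_add _ _ ((hdC z).fun_mul (hdG p _ z))
        (((differentiableAt_const _).fun_mul (hdC z)).fun_mul (hdG p _ z)),
      wdzbar_mul (c 1) _ (hdC z) (hdG p _ z),
      wdzbar_mul (fun w => Complex.I * c 1 w) _
        ((differentiableAt_const _).mul (hdC z)) (hdG p _ z),
      wdzbar_const_mul _ (hdC z) Complex.I, hT2, hT3] at hcl
    linear_combination hcl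
  -- package into a mulVec equation
  have hXY := mulVec_cancel ((F z).map (fun t => (t:ℂ))) (frame_det_isUnit hF z)
    (fun k => (starRingEnd ℂ) (wdzbar (c 1) z) * (if k = ⟨1, by omega⟩ then 1 else 0)
      - Complex.I * (starRingEnd ℂ) (wdzbar (c 1) z) * (if k = ⟨2, by omega⟩ then 1 else 0)
      + (starRingEnd ℂ) (c 1 z)
          * Ment n (fun m => a m z) (fun m => c m z) ((k:ℕ)+1) 2
      - Complex.I * (starRingEnd ℂ) (c 1 z)
          * Ment n (fun m => a m z) (fun m => c m z) ((k:ℕ)+1) 3)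
    (fun k => wdzbar (c 1) z * (if k = ⟨1, by omega⟩ then 1 else 0)
      + Complex.I * wdzbar (c 1) z * (if k = ⟨2, by omega⟩ then 1 else 0)
      + c 1 z * (starRingEnd ℂ) (Ment n (fun m => a m z) (fun m => c m z) ((k:ℕ)+1) 2)
      + Complex.I * c 1 z
          * (starRingEnd ℂ) (Ment n (fun m => a m z) (fun m => c m z) ((k:ℕ)+1) 3)) ?_
  · have e1 := congrFun hXY ⟨1, by omega⟩
    have e2 := congrFun hXY ⟨2, by omega⟩
    simp only [Fin.mk.injEq] at e1 e2
    norm_num [ment_col2 hn, ment_col3 hn] at e1 e2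
    linear_combination ((-1:ℂ)/2) * e1 + (Complex.I/2) * e2
      + ((wdzbar (c 1) z + (starRingEnd ℂ) (wdzbar (c 1) z))/2) * Complex.I_mul_I
  · intro p
    have ept : ∀ k : Fin (2*n+1),
        ((F z).map (fun t => (t:ℂ))) p k = ((F z p k : ℝ) : ℂ) := fun k => rfl
    calc (∑ k, ((F z).map (fun t => (t:ℂ))) p k
            * ((starRingEnd ℂ) (wdzbar (c 1) z) * (if k = ⟨1, by omega⟩ then 1 else 0)
              - Complex.I * (starRingEnd ℂ) (wdzbar (c 1) z) * (if k = ⟨2, by omega⟩ then 1 else 0)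
              + (starRingEnd ℂ) (c 1 z)
                  * Ment n (fun m => a m z) (fun m => c m z) ((k:ℕ)+1) 2
              - Complex.I * (starRingEnd ℂ) (c 1 z)
                  * Ment n (fun m => a m z) (fun m => c m z) ((k:ℕ)+1) 3))
        = (∑ k, ((F z p k : ℝ) : ℂ) * ((starRingEnd ℂ) (wdzbar (c 1) z) * (if k = ⟨1, by omega⟩ then 1 else 0)))
          - (∑ k, ((F z p k : ℝ) : ℂ) * ((Complex.I * (starRingEnd ℂ) (wdzbar (c 1) z)) * (if k = ⟨2, by omega⟩ then 1 else 0)))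
          + (∑ k, ((F z p k : ℝ) : ℂ) * ((starRingEnd ℂ) (c 1 z)
              * Ment n (fun m => a m z) (fun m => c m z) ((k:ℕ)+1) 2))
          - (∑ k, ((F z p k : ℝ) : ℂ) * ((Complex.I * (starRingEnd ℂ) (c 1 z))
              * Ment n (fun m => a m z) (fun m => c m z) ((k:ℕ)+1) 3)) := by
            rw [← Finset.sum_sub_distrib, ← Finset.sum_add_distrib, ← Finset.sum_sub_distrib]
            exact Finset.sum_congr rfl fun k _ => by rw [ept k]; ring
      _ = (starRingEnd ℂ) (wdzbar (c 1) z) * ((F z p ⟨1, by omega⟩ : ℝ) : ℂ)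
          - (Complex.I * (starRingEnd ℂ) (wdzbar (c 1) z)) * ((F z p ⟨2, by omega⟩ : ℝ) : ℂ)
          + (starRingEnd ℂ) (c 1 z) * (∑ k, ((F z p k : ℝ) : ℂ)
              * Ment n (fun m => a m z) (fun m => c m z) ((k:ℕ)+1) 2)
          - (Complex.I * (starRingEnd ℂ) (c 1 z)) * (∑ k, ((F z p k : ℝ) : ℂ)
              * Ment n (fun m => a m z) (fun m => c m z) ((k:ℕ)+1) 3) := by
            rw [sum_ind, sum_ind, sum_scal, sum_scal]
      _ = (∑ k, ((F z p k : ℝ) : ℂ) * (wdzbar (c 1) z * (if k = ⟨1, by omega⟩ then 1 else 0)))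
          + (∑ k, ((F z p k : ℝ) : ℂ) * ((Complex.I * wdzbar (c 1) z) * (if k = ⟨2, by omega⟩ then 1 else 0)))
          + (∑ k, ((F z p k : ℝ) : ℂ) * (c 1 z
              * (starRingEnd ℂ) (Ment n (fun m => a m z) (fun m => c m z) ((k:ℕ)+1) 2)))
          + (∑ k, ((F z p k : ℝ) : ℂ) * ((Complex.I * c 1 z)
              * (starRingEnd ℂ) (Ment n (fun m => a m z) (fun m => c m z) ((k:ℕ)+1) 3))) := by
            rw [sum_ind, sum_ind, sum_scal, sum_scal]
            linear_combination key p
      _ = _ := by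
            rw [← Finset.sum_add_distrib, ← Finset.sum_add_distrib, ← Finset.sum_add_distrib]
            exact Finset.sum_congr rfl fun k _ => by rw [ept k]; ring

end Integrability
set_option maxHeartbeats 1000000 in
/-- If `F` is a primitive frame and `f := F e₁`, then `B(f,f) = 1`,
`∂_z ∂_z̄ f = -2|c₁|² f`, and `⟨∂_z f, ∂_z f⟩ ≡ 0`; in particular `f` is a weakly
conformal harmonic map of `ℂ` into `S^{2n}_1`. -/
theorem stmt3 (n : ℕ) (hn : 2 ≤ n)
    (F : ℂ → Matrix (Fin (2*n+1)) (Fin (2*n+1)) ℝ) (a c : ℕ → ℂ → ℂ)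
    (hF : IsPrimitiveFrame n F a c)
    (f : ℂ → Fin (2*n+1) → ℝ) (hf : ∀ z, f z = (F z).mulVec (eR (2*n+1) 1)) :
    (∀ z, minkR (2*n) (f z) (f z) = 1) ∧
    (∀ z, wdz (wdzbar (cplx f)) z =
      ((-2 * Complex.normSq (c 1 z) : ℂ)) • cplx f z) ∧
    (∀ z, minkC (2*n) (wdz (cplx f) z) (wdz (cplx f) z) = 0) ∧
    IsHarmonicS n f := by
  have h1n : 1 ≤ n := by omega
  have hdC : ∀ w : ℂ, DifferentiableAt ℝ (c 1) w :=
    fun w => ((hF.2.2.2.1 1 h1n).differentiable (by simp)).differentiableAt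
  have hdCc : ∀ w : ℂ, DifferentiableAt ℝ (fun w' => (starRingEnd ℂ) (c 1 w')) w :=
    fun w => (Complex.conjCLE.differentiableAt).comp w (hdC w)
  have hdG : ∀ (p q : Fin (2*n+1)) (w : ℂ),
      DifferentiableAt ℝ (fun w' => ((F w' p q : ℝ) : ℂ)) w := fun p q w =>
    Complex.ofRealCLM.differentiableAt.comp w
      (((hF.1 p q).differentiable (by simp)).differentiableAt)
  have hfE : ∀ (w : ℂ) (i : Fin (2*n+1)), f w i = F w i ⟨0, by omega⟩ := by
    intro w i
    rw [hf w]
    show ∑ j, F w i j * eR (2*n+1) 1 j = _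
    exact sum_collapse1R _ _ _ (fun k => by
      unfold eR
      split_ifs <;>
        first | rfl | (exfalso; simp only [Fin.ext_iff, Fin.val_mk] at *; omega))
  have hOrtho : ∀ (w : ℂ) (p q : Fin (2*n+1)),
      ∑ i : Fin (2*n+1), (if (i:ℕ) = 2*n then (-1:ℝ) else 1) * (F w i p * F w i q)
        = if p = q then (if (p:ℕ) = 2*n then (-1:ℝ) else 1) else 0 := by
    intro w p q
    have h := congrFun (congrFun (hF.2.1 w).1 p) q
    rw [Matrix.mul_apply] at h
    simp only [upsR, Matrix.mul_diagonal, Matrix.transpose_apply,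
      Matrix.diagonal_apply] at h
    rw [← h]
    exact Finset.sum_congr rfl fun i _ => by ring
  have part1 : ∀ w, minkR (2*n) (f w) (f w) = 1 := by
    intro w
    unfold minkR
    have hterm : ∀ i : Fin (2*n+1),
        (if (i:ℕ) = 2*n then -(f w i * f w i) else f w i * f w i)
        = (if (i:ℕ) = 2*n then (-1:ℝ) else 1)
            * (F w i ⟨0, by omega⟩ * F w i ⟨0, by omega⟩) := by
      intro i; rw [hfE w i]; split_ifs <;> ring
    rw [Finset.sum_congr rfl fun i _ => hterm i, hOrtho w _ _, if_pos rfl,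
      if_neg (show ¬((⟨0, by omega⟩ : Fin (2*n+1)) : ℕ) = 2*n by
        simp only [Fin.val_mk]; omega)]
  have hcomp : ∀ i : Fin (2*n+1),
      (fun w => cplx f w i) = fun w => ((F w i ⟨0, by omega⟩ : ℝ) : ℂ) :=
    fun i => funext fun w => congrArg _ (hfE w i)
  have hdf : ∀ w : ℂ, DifferentiableAt ℝ (cplx f) w := fun w =>
    differentiableAt_pi.mpr fun i => by rw [hcomp i]; exact hdG i _ w
  have hwdzf : ∀ (w : ℂ) (i : Fin (2*n+1)),
      wdz (cplx f) w i = c 1 w * ((F w i ⟨1, by omega⟩ : ℝ) : ℂ)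
        + Complex.I * c 1 w * ((F w i ⟨2, by omega⟩ : ℝ) : ℂ) := by
    intro w i
    rw [wdz_comp_pi (cplx f) (hdf w) i, hcomp i]
    exact frame_wdz_col0 hn hF w i
  have part3 : ∀ w, minkC (2*n) (wdz (cplx f) w) (wdz (cplx f) w) = 0 := by
    intro w
    unfold minkC
    have hterm : ∀ i : Fin (2*n+1),
        (if (i:ℕ) = 2*n then -(wdz (cplx f) w i * wdz (cplx f) w i)
          else wdz (cplx f) w i * wdz (cplx f) w i)
        = (c 1 w)^2 * (
            (((if (i:ℕ) = 2*n then (-1:ℝ) else 1)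
              * (F w i ⟨1, by omega⟩ * F w i ⟨1, by omega⟩) : ℝ) : ℂ)
            - (((if (i:ℕ) = 2*n then (-1:ℝ) else 1)
              * (F w i ⟨2, by omega⟩ * F w i ⟨2, by omega⟩) : ℝ) : ℂ)
            + (2*Complex.I) * (((if (i:ℕ) = 2*n then (-1:ℝ) else 1)
              * (F w i ⟨1, by omega⟩ * F w i ⟨2, by omega⟩) : ℝ) : ℂ)) := by
      intro i
      rw [hwdzf w i]
      split_ifs <;> push_cast <;>
        first
          | linear_combination (-(c 1 w)^2 * (((F w i ⟨2, by omega⟩ : ℝ) : ℂ))^2) * Complex.I_mul_I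
          | linear_combination ((c 1 w)^2 * (((F w i ⟨2, by omega⟩ : ℝ) : ℂ))^2) * Complex.I_mul_I
    rw [Finset.sum_congr rfl fun i _ => hterm i, ← Finset.mul_sum,
      Finset.sum_add_distrib, Finset.sum_sub_distrib, ← Finset.mul_sum,
      ← Complex.ofReal_sum, ← Complex.ofReal_sum, ← Complex.ofReal_sum,
      hOrtho w _ _, hOrtho w _ _, hOrtho w _ _,
      if_pos rfl, if_pos rfl,
      if_neg (show ¬(⟨1, by omega⟩ : Fin (2*n+1)) = ⟨2, by omega⟩ by
        simp [Fin.ext_iff]),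
      if_neg (show ¬((⟨1, by omega⟩ : Fin (2*n+1)) : ℕ) = 2*n by
        simp only [Fin.val_mk]; omega),
      if_neg (show ¬((⟨2, by omega⟩ : Fin (2*n+1)) : ℕ) = 2*n by
        simp only [Fin.val_mk]; omega)]
    norm_num
  have hbarf : ∀ w : ℂ, wdzbar (cplx f) w
      = fun i => (starRingEnd ℂ) (c 1 w) * ((F w i ⟨1, by omega⟩ : ℝ) : ℂ)
          - Complex.I * (starRingEnd ℂ) (c 1 w) * ((F w i ⟨2, by omega⟩ : ℝ) : ℂ) := by
    intro w
    funext i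
    rw [wdzbar_comp_pi (cplx f) (hdf w) i, hcomp i]
    exact frame_wdzbar_col0 hn hF w i
  have part2 : ∀ w, wdz (wdzbar (cplx f)) w
      = ((-2 * Complex.normSq (c 1 w) : ℂ)) • cplx f w := by
    intro w
    have hfun : wdzbar (cplx f)
        = fun w' => fun i : Fin (2*n+1) =>
            (starRingEnd ℂ) (c 1 w') * ((F w' i ⟨1, by omega⟩ : ℝ) : ℂ)
            - Complex.I * (starRingEnd ℂ) (c 1 w') * ((F w' i ⟨2, by omega⟩ : ℝ) : ℂ) :=
      funext fun w' => hbarf w'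
    funext i
    have hdbar : DifferentiableAt ℝ (fun w' => fun i : Fin (2*n+1) =>
        (starRingEnd ℂ) (c 1 w') * ((F w' i ⟨1, by omega⟩ : ℝ) : ℂ)
        - Complex.I * (starRingEnd ℂ) (c 1 w') * ((F w' i ⟨2, by omega⟩ : ℝ) : ℂ)) w :=
      differentiableAt_pi.mpr fun i =>
        ((hdCc w).mul (hdG i _ w)).sub
          (((differentiableAt_const _).mul (hdCc w)).mul (hdG i _ w))
    rw [hfun]
    rw [show (((-2 * Complex.normSq (c 1 w) : ℂ)) • cplx f w) i
        = (-2 * (Complex.normSq (c 1 w) : ℂ)) * cplx f w i from rfl]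
    rw [wdz_comp_pi _ hdbar i]
    rw [wdz_sub _ _ ((hdCc w).fun_mul (hdG i _ w))
        (((differentiableAt_const _).fun_mul (hdCc w)).fun_mul (hdG i _ w)),
      wdz_mul (fun w' => (starRingEnd ℂ) (c 1 w')) _ (hdCc w) (hdG i _ w),
      wdz_mul (fun w' => Complex.I * (starRingEnd ℂ) (c 1 w')) _
        ((differentiableAt_const _).mul (hdCc w)) (hdG i _ w),
      wdz_const_mul _ (hdCc w) Complex.I,
      wdz_conj _ (hdC w), frame_cbar hn hF w]
    rw [show cplx f w i = ((F w i ⟨0, by omega⟩ : ℝ) : ℂ) from congrArg _ (hfE w i)]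
    rw [show ((Complex.normSq (c 1 w) : ℝ) : ℂ) = c 1 w * (starRingEnd ℂ) (c 1 w)
      from (Complex.mul_conj _).symm]
    have hcombo := frame_wdz_combo hn hF w i
    simp only [_root_.map_mul, map_neg, Complex.conj_conj, Complex.conj_I]
    linear_combination ((starRingEnd ℂ) (c 1 w)) * hcombo
      - (a 1 w * (starRingEnd ℂ) (c 1 w) * ((F w i ⟨2, by omega⟩ : ℝ) : ℂ)) * Complex.I_mul_I
  refine ⟨part1, part2, part3, ?_, part1, ?_⟩
  · exact contDiff_pi.mpr fun i => by
      rw [show (fun z => f z i) = fun z => F z i ⟨0, by omega⟩ from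
        funext fun z => hfE z i]
      exact hF.1 i _
  · intro z
    refine ⟨-2 * Complex.normSq (c 1 z), ?_⟩
    rw [part2 z]
    congr 1
    push_cast
    ring

end
end

section
/- Let f : ℂ → S⁴₁ be a smooth map which is harmonic, conformal (⟨∂_z f, ∂_z f⟩ vanishes identically), and doubly periodic with respect to a lattice Λ. Then the function z ↦ ⟨∂_z² f, ∂_z² f⟩ is constant; consequently either ⟨∂_z² f, ∂_z² f⟩ vanishes identically (f is isotropic) or it vanishes nowhere (f is superconformal). -/
open Complex Matrix

noncomputable section

section Wirt

variable {E : Type*} [NormedAddCommGroup E] [NormedSpace ℂ E]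

/-- generic Wirtinger-type combination -/
def wd (a b : ℂ) (g : ℂ → E) (z : ℂ) : E :=
  a • fderiv ℝ g z 1 + b • fderiv ℝ g z Complex.I

lemma wdz_eq (g : ℂ → E) : wdz g = wd ((1:ℂ)/2) (-(Complex.I/2)) g := by
  funext z; simp [wdz, wd, neg_smul, sub_eq_add_neg]

lemma wdzbar_eq (g : ℂ → E) : wdzbar g = wd ((1:ℂ)/2) (Complex.I/2) g := rfl

lemma contDiff_wd (a b : ℂ) {g : ℂ → E} (hg : ContDiff ℝ (⊤ : ℕ∞) g) : ContDiff ℝ (⊤ : ℕ∞) (wd a b g) := by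
  have h : ContDiff ℝ (⊤ : ℕ∞) (fun z => fderiv ℝ g z) := hg.fderiv_right (by simp)
  unfold wd
  have h1 : ContDiff ℝ (⊤ : ℕ∞) (fun z => fderiv ℝ g z (1:ℂ)) := h.clm_apply contDiff_const
  have h2 : ContDiff ℝ (⊤ : ℕ∞) (fun z => fderiv ℝ g z Complex.I) := h.clm_apply contDiff_const
  exact (h1.const_smul a).add (h2.const_smul b)

lemma contDiff_wdz {g : ℂ → E} (hg : ContDiff ℝ (⊤ : ℕ∞) g) : ContDiff ℝ (⊤ : ℕ∞) (wdz g) := by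
  rw [wdz_eq]; exact contDiff_wd _ _ hg

lemma contDiff_wdzbar {g : ℂ → E} (hg : ContDiff ℝ (⊤ : ℕ∞) g) : ContDiff ℝ (⊤ : ℕ∞) (wdzbar g) := by
  rw [wdzbar_eq]; exact contDiff_wd _ _ hg

lemma wd_const (a b : ℂ) (c : E) (z : ℂ) : wd a b (fun _ => c) z = 0 := by
  simp [wd]

lemma wd_eval {N : ℕ} (a b : ℂ) (x : ℂ → Fin N → ℂ) (hx : DifferentiableAt ℝ x z)
    (i : Fin N) : wd a b x z i = wd a b (fun w => x w i) z := by
  have h : ∀ i, DifferentiableAt ℝ (fun w => x w i) z := differentiableAt_pi.1 hx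
  have hf : fderiv ℝ x z = ContinuousLinearMap.pi fun i => fderiv ℝ (fun w => x w i) z :=
    fderiv_pi h
  simp [wd, hf]

lemma wd_mul (a b : ℂ) {x y : ℂ → ℂ} (hx : DifferentiableAt ℝ x z)
    (hy : DifferentiableAt ℝ y z) :
    wd a b (fun w => x w * y w) z = wd a b x z * y z + x z * wd a b y z := by
  have h := fderiv_fun_mul hx hy
  simp only [wd, h, ContinuousLinearMap.add_apply, ContinuousLinearMap.smul_apply,
    smul_eq_mul]
  ring

lemma wd_sum {ι : Type*} (s : Finset ι) (a b : ℂ) {h : ι → ℂ → ℂ}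
    (hh : ∀ i ∈ s, DifferentiableAt ℝ (h i) z) :
    wd a b (fun w => ∑ i ∈ s, h i w) z = ∑ i ∈ s, wd a b (h i) z := by
  have := fderiv_fun_sum hh
  simp only [wd, this, ContinuousLinearMap.sum_apply, Finset.smul_sum]
  rw [Finset.sum_add_distrib]

lemma wd_smul (a b : ℂ) {ρ : ℂ → ℂ} {x : ℂ → E} (hρ : DifferentiableAt ℝ ρ z)
    (hx : DifferentiableAt ℝ x z) :
    wd a b (fun w => ρ w • x w) z = wd a b ρ z • x z + ρ z • wd a b x z := by
  have h := fderiv_fun_smul hρ hx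
  simp only [wd, h, ContinuousLinearMap.add_apply, ContinuousLinearMap.smul_apply,
    ContinuousLinearMap.smulRight_apply, smul_eq_mul]
  simp only [smul_smul, smul_add, mul_comm]
  module

end Wirt

section Wirt2
variable {E : Type*} [NormedAddCommGroup E] [NormedSpace ℂ E]

lemma fderiv_wd_apply (a b : ℂ) {g : ℂ → E} (hg : ContDiff ℝ (⊤ : ℕ∞) g) (z w : ℂ) :
    fderiv ℝ (wd a b g) z w =
      a • (fderiv ℝ (fderiv ℝ g) z w 1) + b • (fderiv ℝ (fderiv ℝ g) z w Complex.I) := by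
  have hD : ContDiff ℝ (⊤ : ℕ∞) (fun y => fderiv ℝ g y) := hg.fderiv_right (by simp)
  have hDd : DifferentiableAt ℝ (fun y => fderiv ℝ g y) z :=
    (hD.differentiable (by simp)).differentiableAt
  have hev : ∀ v : ℂ, fderiv ℝ (fun y => fderiv ℝ g y v) z =
      (fderiv ℝ (fderiv ℝ g) z).flip v := by
    intro v
    have := fderiv_clm_apply (𝕜 := ℝ) hDd (differentiableAt_const v)
    simpa using this
  have h1 : DifferentiableAt ℝ (fun y => fderiv ℝ g y (1:ℂ)) z :=
    ((hD.clm_apply contDiff_const).differentiable (by simp)).differentiableAt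
  have h2 : DifferentiableAt ℝ (fun y => fderiv ℝ g y Complex.I) z :=
    ((hD.clm_apply contDiff_const).differentiable (by simp)).differentiableAt
  have : wd a b g = fun y => a • (fderiv ℝ g y 1) + b • (fderiv ℝ g y Complex.I) := rfl
  rw [this, fderiv_fun_add ((h1.fun_const_smul a)) ((h2.fun_const_smul b)),
    fderiv_fun_const_smul h1 a, fderiv_fun_const_smul h2 b]
  simp [hev]

lemma wd_comm (a b a' b' : ℂ) {g : ℂ → E} (hg : ContDiff ℝ (⊤ : ℕ∞) g) (z : ℂ) :
    wd a b (wd a' b' g) z = wd a' b' (wd a b g) z := by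
  have hsym : ∀ v w : ℂ, fderiv ℝ (fderiv ℝ g) z v w = fderiv ℝ (fderiv ℝ g) z w v := by
    intro v w
    exact second_derivative_symmetric
      (fun y => ((hg.differentiable (by simp)) y).hasFDerivAt)
      (((hg.fderiv_right (m := (⊤ : ℕ∞)) (by simp)).differentiable (by simp) z).hasFDerivAt) v w
  simp only [wd, fderiv_wd_apply a b hg, fderiv_wd_apply a' b' hg]
  rw [hsym 1 Complex.I]
  module

lemma wdzbar_wdz_comm {g : ℂ → E} (hg : ContDiff ℝ (⊤ : ℕ∞) g) (z : ℂ) :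
    wdzbar (wdz g) z = wdz (wdzbar g) z := by
  simp only [wdz_eq, wdzbar_eq]
  exact wd_comm _ _ _ _ hg z

lemma wd_periodic (a b : ℂ) {g : ℂ → E} (hg : Differentiable ℝ g) {ω : ℂ}
    (hp : ∀ z, g (z + ω) = g z) (z : ℂ) : wd a b g (z + ω) = wd a b g z := by
  have key : fderiv ℝ g (z + ω) = fderiv ℝ g z := by
    have ht : HasFDerivAt (fun w : ℂ => w + ω) (ContinuousLinearMap.id ℝ ℂ) z :=
      (hasFDerivAt_id z).add_const ω
    have hc := ((hg (z + ω)).hasFDerivAt.comp z ht)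
    have h1 : (fun w => g (w + ω)) = g := funext hp
    have h2 : HasFDerivAt (fun w => g (w + ω))
        ((fderiv ℝ g (z + ω)).comp (ContinuousLinearMap.id ℝ ℂ)) z := hc
    rw [h1, ContinuousLinearMap.comp_id] at h2
    exact (h2.fderiv).symm
  simp [wd, key]

lemma differentiable_of_wdzbar_eq_zero {g : ℂ → ℂ} (hg : ContDiff ℝ (⊤ : ℕ∞) g)
    (h : ∀ z, wdzbar g z = 0) : Differentiable ℂ g := by
  intro z
  set L := fderiv ℝ g z with hLdef
  have hL : HasFDerivAt g L z := ((hg.differentiable (by simp)) z).hasFDerivAt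
  have h0 : ((1:ℂ)/2) • L 1 + (Complex.I/2) • L Complex.I = 0 := h z
  have hI : L Complex.I = Complex.I * L 1 := by
    simp only [smul_eq_mul] at h0
    have h2 : L 1 + Complex.I * L Complex.I = 0 := by
      have := congrArg (fun t => (2:ℂ) * t) h0
      simp at this
      linear_combination 2 * h0
    have : Complex.I * (L 1 + Complex.I * L Complex.I) = 0 := by rw [h2, mul_zero]
    have h3 : Complex.I * L 1 - L Complex.I = 0 := by
      have hI2 : Complex.I * Complex.I = -1 := Complex.I_mul_I
      linear_combination this - (L Complex.I) * hI2
    linear_combination -h3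
  set c := L 1 with hc
  let L' : ℂ →L[ℂ] ℂ := ContinuousLinearMap.smulRight (1 : ℂ →L[ℂ] ℂ) c
  have H : L'.restrictScalars ℝ = L := by
    apply ContinuousLinearMap.ext
    intro w
    have hw : w = w.re • (1:ℂ) + w.im • Complex.I := by
      simp only [Complex.real_smul, mul_one]
      exact (Complex.re_add_im w).symm
    have hLw : L w = (w.re : ℂ) * c + (w.im : ℂ) * (Complex.I * c) := by
      conv_lhs => rw [hw]
      rw [map_add, _root_.map_smul, _root_.map_smul, hI]
      simp [Complex.real_smul, hc]
    simp only [ContinuousLinearMap.coe_restrictScalars', L',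
      ContinuousLinearMap.smulRight_apply, ContinuousLinearMap.one_apply, smul_eq_mul]
    rw [hLw]
    linear_combination (-c) * Complex.re_add_im w
  exact (hasFDerivAt_of_restrictScalars (𝕜 := ℝ) hL H).differentiableAt

end Wirt2

section Mink
variable {m : ℕ}

lemma minkC_eq (m : ℕ) (x y : Fin (m+1) → ℂ) :
    minkC m x y = ∑ i : Fin (m+1), (if (i : ℕ) = m then (-1:ℂ) else 1) * (x i * y i) :=
  Finset.sum_congr rfl (by intro i _; split <;> ring)

lemma minkC_symm (x y : Fin (m+1) → ℂ) : minkC m x y = minkC m y x :=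
  Finset.sum_congr rfl (by intro i _; split <;> ring)

lemma minkC_smul_left (a : ℂ) (x y : Fin (m+1) → ℂ) :
    minkC m (a • x) y = a * minkC m x y := by
  rw [minkC_eq, minkC_eq, Finset.mul_sum]
  exact Finset.sum_congr rfl
    (by intro i _; simp only [Pi.smul_apply, smul_eq_mul]; split <;> ring)

lemma minkC_add_left (x x' y : Fin (m+1) → ℂ) :
    minkC m (x + x') y = minkC m x y + minkC m x' y := by
  rw [minkC_eq, minkC_eq, minkC_eq, ← Finset.sum_add_distrib]
  exact Finset.sum_congr rfl (by intro i _; simp only [Pi.add_apply]; split <;> ring)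

lemma minkC_cplx (v : Fin (m+1) → ℝ) :
    minkC m (fun i => (v i : ℂ)) (fun i => (v i : ℂ)) = ((minkR m v v : ℝ) : ℂ) := by
  rw [minkC, minkR]
  push_cast
  exact Finset.sum_congr rfl (by intro i _; split <;> simp)

lemma contDiff_cplx {N : ℕ} {f : ℂ → Fin N → ℝ} (hf : ContDiff ℝ (⊤ : ℕ∞) f) :
    ContDiff ℝ (⊤ : ℕ∞) (cplx f) := by
  rw [contDiff_pi]
  intro i
  exact Complex.ofRealCLM.contDiff.comp (contDiff_pi.1 hf i)

lemma contDiff_minkC {x y : ℂ → Fin (m+1) → ℂ} (hx : ContDiff ℝ (⊤ : ℕ∞) x)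
    (hy : ContDiff ℝ (⊤ : ℕ∞) y) : ContDiff ℝ (⊤ : ℕ∞) (fun w => minkC m (x w) (y w)) := by
  have : (fun w => minkC m (x w) (y w)) =
      fun w => ∑ i : Fin (m+1), (if (i : ℕ) = m then (-1:ℂ) else 1) * (x w i * y w i) := by
    funext w; exact minkC_eq m (x w) (y w)
  rw [this]
  exact ContDiff.sum fun i _ =>
    contDiff_const.mul ((contDiff_pi.1 hx i).mul (contDiff_pi.1 hy i))

lemma wd_minkC (a b : ℂ) {x y : ℂ → Fin (m+1) → ℂ} (hx : ContDiff ℝ (⊤ : ℕ∞) x)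
    (hy : ContDiff ℝ (⊤ : ℕ∞) y) (z : ℂ) :
    wd a b (fun w => minkC m (x w) (y w)) z =
      minkC m (wd a b x z) (y z) + minkC m (x z) (wd a b y z) := by
  have hxd : DifferentiableAt ℝ x z := (hx.differentiable (by simp)).differentiableAt
  have hyd : DifferentiableAt ℝ y z := (hy.differentiable (by simp)).differentiableAt
  have hxi : ∀ i, DifferentiableAt ℝ (fun w => x w i) z := differentiableAt_pi.1 hxd
  have hyi : ∀ i, DifferentiableAt ℝ (fun w => y w i) z := differentiableAt_pi.1 hyd
  have h1 : (fun w => minkC m (x w) (y w)) =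
      fun w => ∑ i : Fin (m+1), (if (i : ℕ) = m then (-1:ℂ) else 1) * (x w i * y w i) := by
    funext w; exact minkC_eq m (x w) (y w)
  rw [h1, wd_sum Finset.univ a b (fun i _ => (differentiableAt_const _).fun_mul ((hxi i).fun_mul (hyi i)))]
  rw [minkC_eq, minkC_eq, ← Finset.sum_add_distrib]
  refine Finset.sum_congr rfl ?_
  intro i _
  have hmul : wd a b (fun w => (if (i:ℕ) = m then (-1:ℂ) else 1) * (x w i * y w i)) z
      = (if (i:ℕ) = m then (-1:ℂ) else 1) * wd a b (fun w => x w i * y w i) z := by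
    rw [wd_mul a b (differentiableAt_const _) ((hxi i).fun_mul (hyi i))]
    simp [wd_const]
  rw [hmul, wd_mul a b (hxi i) (hyi i), wd_eval a b x hxd i, wd_eval a b y hyd i]
  ring

end Mink

section Derived
variable {E : Type*} [NormedAddCommGroup E] [NormedSpace ℂ E] {m : ℕ}

lemma wdz_minkC' {x y : ℂ → Fin (m+1) → ℂ} (hx : ContDiff ℝ (⊤ : ℕ∞) x) (hy : ContDiff ℝ (⊤ : ℕ∞) y) (z : ℂ) :
    wdz (fun w => minkC m (x w) (y w)) z =
      minkC m (wdz x z) (y z) + minkC m (x z) (wdz y z) := by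
  simp only [wdz_eq]; exact wd_minkC _ _ hx hy z

lemma wdzbar_minkC' {x y : ℂ → Fin (m+1) → ℂ} (hx : ContDiff ℝ (⊤ : ℕ∞) x) (hy : ContDiff ℝ (⊤ : ℕ∞) y)
    (z : ℂ) : wdzbar (fun w => minkC m (x w) (y w)) z =
      minkC m (wdzbar x z) (y z) + minkC m (x z) (wdzbar y z) := by
  simp only [wdzbar_eq]; exact wd_minkC _ _ hx hy z

lemma wdz_const' (c : E) (z : ℂ) : wdz (fun _ => c) z = 0 := by
  simp only [wdz_eq]; exact wd_const _ _ c z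

lemma wdz_smul' {ρ : ℂ → ℂ} {x : ℂ → E} (hρ : DifferentiableAt ℝ ρ z)
    (hx : DifferentiableAt ℝ x z) :
    wdz (fun w => ρ w • x w) z = wdz ρ z • x z + ρ z • wdz x z := by
  simp only [wdz_eq]; exact wd_smul _ _ hρ hx

lemma wdz_periodic' {g : ℂ → E} (hg : Differentiable ℝ g) {ω : ℂ}
    (hp : ∀ z, g (z + ω) = g z) (z : ℂ) : wdz g (z + ω) = wdz g z := by
  simp only [wdz_eq]; exact wd_periodic _ _ hg hp z

end Derived


/-- If `f : ℂ → S⁴₁` is a smooth harmonic conformal map, doubly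
periodic with respect to a lattice, then `z ↦ ⟨∂_z² f, ∂_z² f⟩` is constant;
consequently it either vanishes identically (`f` isotropic) or vanishes nowhere
(`f` superconformal). -/
theorem stmt12 (f : ℂ → Fin (2*2+1) → ℝ)
    (hsmooth : ContDiff ℝ (⊤ : ℕ∞) f)
    (hsphere : ∀ z, minkR (2*2) (f z) (f z) = 1)
    (hharm : ∀ z, ∃ r : ℝ, wdz (wdzbar (cplx f)) z = (r : ℂ) • cplx f z)
    (hconf : ∀ z, minkC (2*2) (wdz (cplx f) z) (wdz (cplx f) z) = 0)
    (ω₁ ω₂ : ℂ) (hper : DoublyPeriodic ω₁ ω₂ f) :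
    (∃ k : ℂ, ∀ z,
      minkC (2*2) (wdz^[2] (cplx f) z) (wdz^[2] (cplx f) z) = k) ∧
    ((∀ z, minkC (2*2) (wdz^[2] (cplx f) z) (wdz^[2] (cplx f) z) = 0) ∨
      (∀ z, minkC (2*2) (wdz^[2] (cplx f) z) (wdz^[2] (cplx f) z) ≠ 0)) := by
  obtain ⟨hli, hperf⟩ := hper
  have hF : ContDiff ℝ (⊤ : ℕ∞) (cplx f) := contDiff_cplx hsmooth
  set F := cplx f with hFdef
  have hu1 : ContDiff ℝ (⊤ : ℕ∞) (wdz F) := contDiff_wdz hF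
  have hu2 : ContDiff ℝ (⊤ : ℕ∞) (wdz (wdz F)) := contDiff_wdz hu1
  have h1 : ∀ z, minkC (2*2) (F z) (F z) = 1 := by
    intro z
    have := minkC_cplx (m := 2*2) (f z)
    rw [hsphere z] at this
    rw [Complex.ofReal_one] at this; exact this
  have h2 : ∀ z, minkC (2*2) (wdz F z) (F z) = 0 := by
    intro z
    have hc : (fun w => minkC (2*2) (F w) (F w)) = fun _ => (1:ℂ) := funext h1
    have h0 := wdz_minkC' hF hF z
    rw [hc, wdz_const'] at h0
    rw [minkC_symm (F z)] at h0
    linear_combination -h0/2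
  have h3 : ∀ z, minkC (2*2) (wdz (wdz F) z) (F z) = 0 := by
    intro z
    have hc : (fun w => minkC (2*2) (wdz F w) (F w)) = fun _ => (0:ℂ) := funext h2
    have h0 := wdz_minkC' hu1 hF z
    rw [hc, wdz_const', hconf z] at h0
    linear_combination -h0
  have h4 : ∀ z, minkC (2*2) (wdz (wdz F) z) (wdz F z) = 0 := by
    intro z
    have hc : (fun w => minkC (2*2) (wdz F w) (wdz F w)) = fun _ => (0:ℂ) := funext hconf
    have h0 := wdz_minkC' hu1 hu1 z
    rw [hc, wdz_const'] at h0
    rw [minkC_symm (wdz F z) (wdz (wdz F) z)] at h0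
    linear_combination -h0/2
  set G := wdz (wdzbar F) with hGdef
  have hGsm : ContDiff ℝ (⊤ : ℕ∞) G := contDiff_wdz (contDiff_wdzbar hF)
  set ρ : ℂ → ℂ := fun z => minkC (2*2) (G z) (F z) with hρdef
  have hρ : ContDiff ℝ (⊤ : ℕ∞) ρ := contDiff_minkC hGsm hF
  have hGρ : ∀ z, G z = ρ z • F z := by
    intro z
    obtain ⟨r, hr⟩ := hharm z
    have hρz : ρ z = (r : ℂ) := by
      rw [hρdef]
      simp only
      rw [show G z = (r:ℂ) • F z from hr, minkC_smul_left, h1 z, mul_one]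
    rw [hρz]
    exact hr
  set η : ℂ → ℂ := fun z => minkC (2*2) (wdz (wdz F) z) (wdz (wdz F) z) with hηdef
  have hη : ContDiff ℝ (⊤ : ℕ∞) η := contDiff_minkC hu2 hu2
  have h5 : ∀ z, wdzbar η z = 0 := by
    intro z
    have hb : wdzbar (wdz (wdz F)) z = wdz G z := by
      rw [wdzbar_wdz_comm hu1 z]
      have he : wdzbar (wdz F) = G := funext fun y => wdzbar_wdz_comm hF y
      rw [he]
    have hwg : wdz G z = wdz ρ z • F z + ρ z • wdz F z := by
      have he : G = fun w => ρ w • F w := funext hGρ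
      rw [he]
      exact wdz_smul' ((hρ.differentiable (by simp)).differentiableAt)
        ((hF.differentiable (by simp)).differentiableAt)
    have h6 := wdzbar_minkC' hu2 hu2 z
    rw [hb, hwg] at h6
    rw [hηdef]
    rw [h6, minkC_add_left, minkC_smul_left, minkC_smul_left,
      minkC_symm (F z), minkC_symm (wdz F z), h3 z, h4 z]
    have hadd : minkC (2*2) (wdz (wdz F) z) (wdz ρ z • F z + ρ z • wdz F z) = 0 := by
      rw [minkC_symm, minkC_add_left, minkC_smul_left, minkC_smul_left,
        minkC_symm (F z), minkC_symm (wdz F z), h3 z, h4 z]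
      ring
    rw [hadd]
    ring
  have hdiff : Differentiable ℂ η := differentiable_of_wdzbar_eq_zero hη h5
  -- periodicity of η
  have hηper : ∀ ω : ℂ, (∀ z, f (z + ω) = f z) → ∀ z, η (z + ω) = η z := by
    intro ω hω z
    have hFper : ∀ w, F (w + ω) = F w := by
      intro w; rw [hFdef]; unfold cplx; rw [hω]
    have hu1per : ∀ w, wdz F (w + ω) = wdz F w :=
      fun w => wdz_periodic' (hF.differentiable (by simp)) hFper w
    have hu2per : ∀ w, wdz (wdz F) (w + ω) = wdz (wdz F) w :=
      fun w => wdz_periodic' (hu1.differentiable (by simp)) hu1per w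
    rw [hηdef]
    simp only
    rw [hu2per z]
  -- boundedness
  set K : Set ℂ := (fun p : ℝ × ℝ => p.1 • ω₁ + p.2 • ω₂) ''
    (Set.Icc (0:ℝ) 1 ×ˢ Set.Icc (0:ℝ) 1) with hKdef
  have hK : IsCompact K :=
    (isCompact_Icc.prod isCompact_Icc).image
      ((continuous_fst.smul continuous_const).add (continuous_snd.smul continuous_const))
  have hper1 : Function.Periodic η ω₁ := fun x => hηper ω₁ (fun w => (hperf w).1) x
  have hper2 : Function.Periodic η ω₂ := fun x => hηper ω₂ (fun w => (hperf w).2) x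
  have hrange : Set.range η ⊆ η '' K := by
    rintro _ ⟨z, rfl⟩
    have hcard : Fintype.card (Fin 2) = Module.finrank ℝ ℂ := by
      simp [Complex.finrank_real_complex]
    let b := basisOfLinearIndependentOfCardEqFinrank hli hcard
    have hbc : ⇑b = ![ω₁, ω₂] := coe_basisOfLinearIndependentOfCardEqFinrank hli hcard
    set s : ℝ := b.repr z 0 with hs
    set t : ℝ := b.repr z 1 with ht
    have hz : z = s • ω₁ + t • ω₂ := by
      have hsum := b.sum_repr z
      rw [Fin.sum_univ_two] at hsum
      rw [← hsum, hbc]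
      simp
      rfl
    set z₀ : ℂ := Int.fract s • ω₁ + Int.fract t • ω₂ with hz₀def
    have hz₀K : z₀ ∈ K := by
      refine ⟨(Int.fract s, Int.fract t), ⟨⟨Int.fract_nonneg s, (Int.fract_lt_one s).le⟩,
        ⟨Int.fract_nonneg t, (Int.fract_lt_one t).le⟩⟩, rfl⟩
    refine ⟨z₀, hz₀K, ?_⟩
    have e1 := (hper1.zsmul ⌊s⌋) (z₀ + ⌊t⌋ • ω₂)
    have e2 := (hper2.zsmul ⌊t⌋) z₀
    have hzeq : z = z₀ + (⌊t⌋ : ℤ) • ω₂ + (⌊s⌋ : ℤ) • ω₁ := by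
      rw [hz, hz₀def]
      simp only [Int.fract, Complex.real_smul, zsmul_eq_mul, Complex.ofReal_sub,
        Complex.ofReal_intCast]
      ring
    rw [hzeq, e1, e2]
  have hbound : Bornology.IsBounded (Set.range η) :=
    ((hK.image hη.continuous).isBounded).subset hrange
  have hkey : ∀ z, η z = η 0 := fun z => hdiff.apply_eq_apply_of_bounded hbound z 0
  have hiter : ∀ z, minkC (2*2) (wdz^[2] (cplx f) z) (wdz^[2] (cplx f) z) = η z := by
    intro z
    have : wdz^[2] (cplx f) = wdz (wdz F) := by
      rw [hFdef]
      simp [Function.iterate_succ, Function.iterate_zero]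
    rw [this, hηdef]
  constructor
  · exact ⟨η 0, fun z => by rw [hiter z, hkey z]⟩
  · rcases eq_or_ne (η 0) 0 with h | h
    · left; intro z; rw [hiter z, hkey z, h]
    · right; intro z; rw [hiter z, hkey z]; exact h

end
end
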